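/- arXiv:2109.06911 — 2 statements merged into one kernel-verified Lean document; each statement's English description precedes it below -/
import Mathlib

section
/- Consider the superexponential regime in which a_T/T → ∞. The robust predictor ĉ_R(x,P,T) := max_{i∈Σ} ℓ(x,i) is a regular predictor satisfying the out-of-sample guarantee, and for every regular predictor ĉ ∈ 𝒞 satisfying the out-of-sample guarantee one has ĉ_R ⪯_𝒞 ĉ; that is, ĉ_R is a strongly optimal predictor in the superexponential regime. -/
open Filter Asymptotics

namespace DDO

/-- The probability simplex `𝒫` over the scenario set `Σ = Fin d`. -/
def simplex (d : ℕ) : Set (Fin d → ℝ) :=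
  {P | (∀ i, 0 ≤ P i) ∧ ∑ i, P i = 1}

/-- The relative interior `𝒫°` of the probability simplex. -/
def simplexInt (d : ℕ) : Set (Fin d → ℝ) :=
  {P | (∀ i, 0 < P i) ∧ ∑ i, P i = 1}

/-- Expected cost `c(x, P) = ∑ i, ℓ(x, i) · P(i)` (extended linearly to `ℝ^d`). -/
noncomputable def cost {X : Type*} {d : ℕ} (ℓ : X → Fin d → ℝ) (x : X)
    (P : Fin d → ℝ) : ℝ :=
  ∑ i, ℓ x i * P i

/-- Variance `Var_P(ℓ(x, ξ))` of the loss under `P`. -/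
noncomputable def varLoss {X : Type*} {d : ℕ} (ℓ : X → Fin d → ℝ) (x : X)
    (P : Fin d → ℝ) : ℝ :=
  (∑ i, ℓ x i ^ 2 * P i) - cost ℓ x P ^ 2

/-- Empirical distribution `P̂_T` of the `T` samples `ω`. -/
noncomputable def empDist {d T : ℕ} (ω : Fin T → Fin d) : Fin d → ℝ :=
  fun i => ((Finset.univ.filter (fun t => ω t = i)).card : ℝ) / (T : ℝ)

open Classical in
/-- `ℙ^∞(A)`: the probability, under i.i.d. sampling from `P`, of an event `A`
depending on the first `T` samples. -/
noncomputable def probT {d : ℕ} (P : Fin d → ℝ) (T : ℕ)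
    (A : (Fin T → Fin d) → Prop) : ℝ :=
  ∑ ω : Fin T → Fin d, if A ω then ∏ t, P (ω t) else 0

/-- Regular predictors (the class `𝒞`): uniformly bounded, equicontinuous,
differentiable in the distribution argument (in the Fréchet sense along the simplex),
with uniformly bounded and equicontinuous derivatives. -/
structure IsRegularPredictor {X : Type*} [MetricSpace X] (d : ℕ)
    (chat : X → (Fin d → ℝ) → ℕ → ℝ) : Prop where
  unifBounded : ∃ K : ℝ, ∀ (T : ℕ) (x : X), ∀ P ∈ simplex d, |chat x P T| ≤ K
  equicontinuous : ∀ (x : X), ∀ P ∈ simplex d, ∀ ε > (0 : ℝ), ∃ δ > (0 : ℝ),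
    ∀ (T : ℕ) (x' : X), ∀ P' ∈ simplex d,
      dist x x' < δ → dist P P' < δ → |chat x P T - chat x' P' T| < ε
  differentiableDeriv : ∃ D : X → (Fin d → ℝ) → ℕ → ((Fin d → ℝ) →L[ℝ] ℝ),
    (∀ (T : ℕ) (x : X), ∀ P ∈ simplex d,
      HasFDerivWithinAt (fun Q => chat x Q T) (D x P T) (simplex d) P) ∧
    (∃ K : ℝ, ∀ (T : ℕ) (x : X), ∀ P ∈ simplex d, ‖D x P T‖ ≤ K) ∧
    (∀ (x : X), ∀ P ∈ simplex d, ∀ ε > (0 : ℝ), ∃ δ > (0 : ℝ),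
      ∀ (T : ℕ) (x' : X), ∀ P' ∈ simplex d,
        dist x x' < δ → dist P P' < δ → ‖D x P T - D x' P' T‖ < ε)

/-- The out-of-sample guarantee at speed `(a_T)`:
`limsup_{T→∞} (1/a_T) · log ℙ^∞( c(x,P) > ĉ(x, P̂_T, T) ) ≤ -1`
for every `x ∈ 𝒳` and `P ∈ 𝒫°`, stated in the equivalent ε-eventual form
`ℙ^∞(disappointment) ≤ exp((-1+ε) a_T)` eventually (which in particular permits a
disappointment probability equal to zero). -/
def OOSGuarantee {X : Type*} {d : ℕ} (ℓ : X → Fin d → ℝ) (a : ℕ → ℝ)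
    (chat : X → (Fin d → ℝ) → ℕ → ℝ) : Prop :=
  ∀ (x : X), ∀ P ∈ simplexInt d, ∀ ε > (0 : ℝ), ∀ᶠ T : ℕ in atTop,
    probT P T (fun ω => cost ℓ x P > chat x (empDist ω) T) ≤
      Real.exp ((-1 + ε) * a T)

/-- The prediction error `|ĉ(x,P,T) - c(x,P)|`. -/
noncomputable def predErr {X : Type*} {d : ℕ} (ℓ : X → Fin d → ℝ)
    (chat : X → (Fin d → ℝ) → ℕ → ℝ) (x : X) (P : Fin d → ℝ) (T : ℕ) : ℝ :=
  |chat x P T - cost ℓ x P|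

open Classical in
/-- Ratio with the convention `0 / 0 = 1`. -/
noncomputable def ratio (u v : ℝ) : ℝ := if u = 0 ∧ v = 0 then 1 else u / v

/-- The partial order `⪯_𝒞` on predictors:
`limsup_{T→∞} |ĉ₁(x,P,T) - c(x,P)| / |ĉ₂(x,P,T) - c(x,P)| ≤ 1`
(convention `0/0 = 1`) for every `x ∈ 𝒳`, `P ∈ 𝒫°`, stated in the equivalent
ε-eventual form (the ratio is a nonnegative sequence). -/
def PredOrder {X : Type*} {d : ℕ} (ℓ : X → Fin d → ℝ)
    (chat1 chat2 : X → (Fin d → ℝ) → ℕ → ℝ) : Prop :=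
  ∀ (x : X), ∀ P ∈ simplexInt d, ∀ ε > (0 : ℝ), ∀ᶠ T : ℕ in atTop,
    ratio (predErr ℓ chat1 x P T) (predErr ℓ chat2 x P T) ≤ 1 + ε

/-- The equivalence `≡` on predictors: `|ĉ₁ - c|` and `|ĉ₂ - c|` are asymptotically
equivalent as `T → ∞` for every `x ∈ 𝒳` and `P ∈ 𝒫°`. -/
def PredEquiv {X : Type*} {d : ℕ} (ℓ : X → Fin d → ℝ)
    (chat1 chat2 : X → (Fin d → ℝ) → ℕ → ℝ) : Prop :=
  ∀ (x : X), ∀ P ∈ simplexInt d,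
    (fun T : ℕ => predErr ℓ chat1 x P T) ~[atTop]
      (fun T : ℕ => predErr ℓ chat2 x P T)

/-- A single term `q · log(q/p)` of the relative entropy, with the conventions
`0 · log(0/p) = 0` and `q · log(q/0) = ∞` for `q > 0`. -/
noncomputable def klTerm (q p : ℝ) : EReal :=
  if q = 0 then 0 else if p = 0 then ⊤ else ((q * Real.log (q / p) : ℝ) : EReal)

/-- The relative entropy (KL divergence) `I(Q, P')`. -/
noncomputable def relEnt {d : ℕ} (Q P' : Fin d → ℝ) : EReal :=
  ∑ i, klTerm (Q i) (P' i)

/-- The KL-DRO predictor with radius `r`: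
`ĉ_KL(x,P) = sup { c(x,P') : P' ∈ 𝒫, I(P,P') ≤ r }`. -/
noncomputable def cKL {X : Type*} {d : ℕ} (ℓ : X → Fin d → ℝ) (r : ℝ)
    (x : X) (P : Fin d → ℝ) : ℝ :=
  sSup {y | ∃ P' ∈ simplex d, relEnt P P' ≤ (r : EReal) ∧ y = cost ℓ x P'}

/-- The robust predictor `ĉ_R(x) = max_{i ∈ Σ} ℓ(x,i)`. -/
noncomputable def cR {X : Type*} {d : ℕ} (ℓ : X → Fin d → ℝ) (x : X) : ℝ :=
  ⨆ i : Fin d, ℓ x i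

/-- The sample variance penalization (SVP) predictor
`ĉ_V(x,P,T) = c(x,P) + √((2 a_T / T) · Var_P(ℓ(x,ξ)))`. -/
noncomputable def cV {X : Type*} {d : ℕ} (a : ℕ → ℝ) (ℓ : X → Fin d → ℝ)
    (x : X) (P : Fin d → ℝ) (T : ℕ) : ℝ :=
  cost ℓ x P + Real.sqrt ((2 * a T / (T : ℝ)) * varLoss ℓ x P)

/-- The squared local ellipsoid norm `‖Δ‖_P² = (1/2) ∑ i, Δ_i² / P(i)`. -/
noncomputable def ellNormSq {d : ℕ} (P Δ : Fin d → ℝ) : ℝ :=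
  (1 / 2) * ∑ i, Δ i ^ 2 / P i

/-- The optimal cost `c*(P) = min_{x ∈ 𝒳} c(x,P)`. -/
noncomputable def cstar {X : Type*} {d : ℕ} (ℓ : X → Fin d → ℝ)
    (P : Fin d → ℝ) : ℝ :=
  sInf (Set.range fun x : X => cost ℓ x P)

/-- The optimal predicted cost `ĉ*(P,T) = min_{x ∈ 𝒳} ĉ(x,P,T)`. -/
noncomputable def chatStar {X : Type*} {d : ℕ} (chat : X → (Fin d → ℝ) → ℕ → ℝ)
    (P : Fin d → ℝ) (T : ℕ) : ℝ :=
  sInf (Set.range fun x : X => chat x P T)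

/-- `x̂` is a prescriptor associated with the predictor `ĉ`:
`x̂_T(P) ∈ argmin_{x ∈ 𝒳} ĉ(x,P,T)` for all `P ∈ 𝒫` and `T`. -/
def IsPrescriptor {X : Type*} {d : ℕ} (chat : X → (Fin d → ℝ) → ℕ → ℝ)
    (xhat : ℕ → (Fin d → ℝ) → X) : Prop :=
  ∀ (T : ℕ), ∀ P ∈ simplex d, ∀ x : X, chat (xhat T P) P T ≤ chat x P T

/-- The prescription out-of-sample guarantee at speed `(a_T)`:
`limsup_{T→∞} (1/a_T) · log ℙ^∞( c(x̂_T(P̂_T), P) > ĉ*(P̂_T, T) ) ≤ -1`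
for every `P ∈ 𝒫°`, stated in the equivalent ε-eventual form. -/
def PrescOOSGuarantee {X : Type*} {d : ℕ} (ℓ : X → Fin d → ℝ) (a : ℕ → ℝ)
    (chat : X → (Fin d → ℝ) → ℕ → ℝ) (xhat : ℕ → (Fin d → ℝ) → X) : Prop :=
  ∀ P ∈ simplexInt d, ∀ ε > (0 : ℝ), ∀ᶠ T : ℕ in atTop,
    probT P T (fun ω =>
        cost ℓ (xhat T (empDist ω)) P > chatStar chat (empDist ω) T) ≤
      Real.exp ((-1 + ε) * a T)

/-- The partial order `⪯_X̂` on prescriptors: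
`limsup_{T→∞} |ĉ₁*(P,T) - c*(P)| / |ĉ₂*(P,T) - c*(P)| ≤ 1` (convention `0/0 = 1`)
for every `P ∈ 𝒫°`, stated in the equivalent ε-eventual form. -/
def PrescOrder {X : Type*} {d : ℕ} (ℓ : X → Fin d → ℝ)
    (chat1 chat2 : X → (Fin d → ℝ) → ℕ → ℝ) : Prop :=
  ∀ P ∈ simplexInt d, ∀ ε > (0 : ℝ), ∀ᶠ T : ℕ in atTop,
    ratio |chatStar chat1 P T - cstar ℓ P| |chatStar chat2 P T - cstar ℓ P| ≤ 1 + ε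

/-- The equivalence `≡_X̂` on prescriptors: `|ĉ₁* - c*|` and `|ĉ₂* - c*|` are
asymptotically equivalent as `T → ∞` for every `P ∈ 𝒫°`. -/
def PrescEquiv {X : Type*} {d : ℕ} (ℓ : X → Fin d → ℝ)
    (chat1 chat2 : X → (Fin d → ℝ) → ℕ → ℝ) : Prop :=
  ∀ P ∈ simplexInt d,
    (fun T : ℕ => |chatStar chat1 P T - cstar ℓ P|) ~[atTop]
      (fun T : ℕ => |chatStar chat2 P T - cstar ℓ P|)

/-!
The robust predictor never disappoints, since `c(x,P) ≤ max_i ℓ(x,i)` on the simplex.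
Conversely, let `ĉ` be regular with the out-of-sample guarantee and fix `x`. Mixing the point
mass at a worst scenario with a little of `P` gives `P' ∈ 𝒫°` with `c(x,P')` as close to
`max_i ℓ(x,i)` as we like. Under `P'` every sample path of length `T` has probability at least
`(min P')^T = exp(-O(T))`, which eventually exceeds `exp(-a_T/2)` when `a_T/T → ∞`; hence
eventually `ĉ(x,Q,T) ≥ c(x,P')` at every empirical distribution `Q`. Empirical distributions
are `1/T`-dense in the simplex and `ĉ` is equicontinuous, so `ĉ(x,P,T) ≥ max_i ℓ(x,i) - η`
eventually: the error of `ĉ` eventually dominates `max_i ℓ(x,i) - c(x,P)`, the error of the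
robust predictor.
-/

section Simplex

variable {d : ℕ}

lemma simplexInt_subset_simplex : simplexInt d ⊆ simplex d :=
  fun _ hP => ⟨fun i => (hP.1 i).le, hP.2⟩

lemma nonempty_of_mem_simplex {P : Fin d → ℝ} (hP : P ∈ simplex d) : Nonempty (Fin d) := by
  by_contra h
  rw [not_nonempty_iff] at h
  simpa using hP.2

lemma exists_pos_le_of_mem_simplexInt {P : Fin d → ℝ} (hP : P ∈ simplexInt d) :
    ∃ p > 0, ∀ i, p ≤ P i := by
  have := nonempty_of_mem_simplex (simplexInt_subset_simplex hP)
  obtain ⟨i, hi⟩ := Finite.exists_min P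
  exact ⟨P i, hP.1 i, hi⟩

end Simplex

section Robust

variable {X : Type*} {d : ℕ} (ℓ : X → Fin d → ℝ)

lemma le_cR (x : X) (i : Fin d) : ℓ x i ≤ cR ℓ x :=
  le_ciSup (Finite.bddAbove_range _) i

lemma cost_le_cR (x : X) {P : Fin d → ℝ} (hP : P ∈ simplex d) : cost ℓ x P ≤ cR ℓ x :=
  calc cost ℓ x P ≤ ∑ i, cR ℓ x * P i :=
        Finset.sum_le_sum fun i _ => mul_le_mul_of_nonneg_right (le_cR ℓ x i) (hP.1 i)
    _ = cR ℓ x := by rw [← Finset.mul_sum, hP.2, mul_one]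

lemma continuous_cR [TopologicalSpace X] (hℓ : ∀ i, Continuous fun x => ℓ x i) :
    Continuous (cR ℓ) := by
  rcases isEmpty_or_nonempty (Fin d) with hd | hd
  · rw [show cR ℓ = fun _ => 0 from funext fun x => Real.iSup_of_isEmpty _]
    exact continuous_const
  · have : cR ℓ = fun x => Finset.univ.sup' Finset.univ_nonempty (ℓ x) :=
      funext fun x => (Finset.sup'_univ_eq_ciSup _).symm
    rw [this]
    exact Continuous.finset_sup'_apply _ fun i _ => hℓ i

lemma exists_mem_simplexInt_cR_sub_lt_cost (x : X) {P : Fin d → ℝ} (hP : P ∈ simplexInt d)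
    {η : ℝ} (hη : 0 < η) : ∃ P' ∈ simplexInt d, cR ℓ x - η < cost ℓ x P' := by
  have := nonempty_of_mem_simplex (simplexInt_subset_simplex hP)
  obtain ⟨i, hi⟩ := exists_eq_ciSup_of_finite (f := ℓ x)
  set B := cR ℓ x - cost ℓ x P
  have hB : 0 ≤ B := sub_nonneg.2 (cost_le_cR ℓ x (simplexInt_subset_simplex hP))
  set s := η / (B + η)
  have hs : 0 < s := by positivity
  have hs1 : s ≤ 1 := (div_le_one (by positivity)).2 (by linarith)
  refine ⟨(1 - s) • Pi.single i 1 + s • P, ⟨fun j => ?_, ?_⟩, ?_⟩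
  · simp only [Pi.add_apply, Pi.smul_apply, smul_eq_mul]
    exact add_pos_of_nonneg_of_pos
      (mul_nonneg (by linarith) (by rw [Pi.single_apply]; positivity))
      (mul_pos hs (hP.1 j))
  · simp only [Pi.add_apply, Pi.smul_apply, smul_eq_mul, Finset.sum_add_distrib,
      ← Finset.mul_sum, Finset.sum_pi_single', Finset.mem_univ, if_true, hP.2]
    ring
  · have hsB : s * B < η := by
      rw [div_mul_eq_mul_div, div_lt_iff₀ (by positivity)]
      nlinarith
    have : cost ℓ x ((1 - s) • Pi.single i 1 + s • P) = cR ℓ x - s * B := by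
      change ℓ x ⬝ᵥ _ = _
      rw [dotProduct_add, dotProduct_smul, dotProduct_smul, dotProduct_single, smul_eq_mul,
        smul_eq_mul, hi]
      simp only [B, cR, cost, dotProduct]
      ring
    rw [this]
    linarith

end Robust

section Sampling

variable {d T : ℕ}

lemma probT_eq_zero {P : Fin d → ℝ} {A : (Fin T → Fin d) → Prop} (hA : ∀ ω, ¬ A ω) :
    probT P T A = 0 :=
  Finset.sum_eq_zero fun ω _ => if_neg (hA ω)

lemma pow_le_probT {P : Fin d → ℝ} {p : ℝ} (hp : 0 ≤ p) (hpP : ∀ i, p ≤ P i)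
    {A : (Fin T → Fin d) → Prop} {ω₀ : Fin T → Fin d} (hA : A ω₀) : p ^ T ≤ probT P T A := by
  classical
  calc p ^ T = ∏ _t : Fin T, p := by simp
    _ ≤ ∏ t, P (ω₀ t) := Finset.prod_le_prod (fun _ _ => hp) fun t _ => hpP _
    _ = if A ω₀ then ∏ t, P (ω₀ t) else 0 := (if_pos hA).symm
    _ ≤ probT P T A := by
      refine Finset.single_le_sum (f := fun ω => if A ω then ∏ t, P (ω t) else 0)
        (fun ω _ => ?_) (Finset.mem_univ ω₀)
      split_ifs
      · exact Finset.prod_nonneg fun t _ => hp.trans (hpP _)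
      · exact le_rfl

lemma empDist_mem_simplex (hT : 0 < T) (ω : Fin T → Fin d) : empDist ω ∈ simplex d := by
  refine ⟨fun i => by unfold empDist; positivity, ?_⟩
  simp only [empDist, ← Finset.sum_div]
  rw [← Nat.cast_sum, ← Finset.card_eq_sum_card_fiberwise fun t _ => Finset.mem_univ (ω t)]
  simp [hT.ne']

lemma exists_card_filter_eq {ι : Type*} [Fintype ι] [DecidableEq ι] (k : ι → ℕ)
    (hk : ∑ i, k i = T) :
    ∃ ω : Fin T → ι, ∀ i, (Finset.univ.filter fun t => ω t = i).card = k i := by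
  subst hk
  let e : (Σ i, Fin (k i)) ≃ Fin (∑ i, k i) := Fintype.equivFinOfCardEq (by simp)
  refine ⟨fun t => (e.symm t).1, fun i => ?_⟩
  rw [← Fintype.card_subtype, Fintype.card_congr
    ((e.symm.subtypeEquiv fun _ => Iff.rfl).trans (Equiv.sigmaSubtype i)), Fintype.card_fin]

/-- Cumulative rounding: the `i`-th scenario gets `⌊T S_{i+1}⌋ - ⌊T S_i⌋` of the `T` samples,
where `S_n` is the `n`-th partial sum of `P`. -/
lemma exists_dist_empDist_le (hT : 0 < T) {P : Fin d → ℝ} (hP : P ∈ simplex d) :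
    ∃ ω : Fin T → Fin d, dist P (empDist ω) ≤ 1 / T := by
  have hT' : (0 : ℝ) < T := Nat.cast_pos.2 hT
  set q : ℕ → ℝ := fun n => if h : n < d then P ⟨n, h⟩ else 0
  have hq : ∀ n, 0 ≤ q n := fun n => by
    simp only [q]; split_ifs
    exacts [hP.1 _, le_rfl]
  set S : ℕ → ℝ := fun n => ∑ j ∈ Finset.range n, q j
  have hS : ∀ n, 0 ≤ (T : ℝ) * S n := fun n =>
    mul_nonneg hT'.le (Finset.sum_nonneg fun j _ => hq j)
  have hS_succ : ∀ n, S (n + 1) = S n + q n := fun n => Finset.sum_range_succ q n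
  set m : ℕ → ℕ := fun n => ⌊(T : ℝ) * S n⌋₊
  have hm : Monotone m := monotone_nat_of_le_succ fun n =>
    Nat.floor_le_floor (by rw [hS_succ]; nlinarith [hq n])
  have hsum : ∑ i : Fin d, (m (i + 1) - m i) = T := by
    rw [Fin.sum_univ_eq_sum_range (fun n => m (n + 1) - m n), Finset.sum_range_tsub hm]
    have : S d = 1 := by
      rw [← hP.2]
      exact (Fin.sum_univ_eq_sum_range q d).symm.trans (by simp [q])
    simp [m, S, this]
  obtain ⟨ω, hω⟩ := exists_card_filter_eq _ hsum
  refine ⟨ω, (dist_pi_le_iff (by positivity)).2 fun i => ?_⟩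
  have hfloor : ∀ n, (m n : ℝ) ≤ T * S n ∧ T * S n < m n + 1 := fun n =>
    ⟨Nat.floor_le (hS n), Nat.lt_floor_add_one _⟩
  have hS_i : T * S (i + 1) = T * S i + T * P i := by
    rw [hS_succ, show q i = P i from dif_pos i.isLt, mul_add]
  have hround : |T * P i - (m (i + 1) - m i)| ≤ 1 := by
    obtain ⟨h₁, h₂⟩ := hfloor i
    obtain ⟨h₃, h₄⟩ := hfloor (i + 1)
    exact abs_le.2 ⟨by linarith, by linarith⟩
  calc dist (P i) (empDist ω i) = |T * P i - (m (i + 1) - m i)| / T := by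
        rw [Real.dist_eq, empDist, hω, Nat.cast_sub (hm (Nat.le_succ i)), ← abs_of_pos hT',
          ← abs_div, abs_of_pos hT']
        congr 1
        field_simp
    _ ≤ 1 / T := by gcongr

end Sampling

section Predictor

variable {X : Type*} {d : ℕ}

lemma isRegularPredictor_const [MetricSpace X] [CompactSpace X] {f : X → ℝ}
    (hf : Continuous f) : IsRegularPredictor d (fun x (_ : Fin d → ℝ) (_ : ℕ) => f x) where
  unifBounded := by
    obtain ⟨K, hK⟩ := isCompact_univ.exists_bound_of_continuousOn hf.continuousOn
    exact ⟨K, fun _ x _ _ => hK x (Set.mem_univ x)⟩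
  equicontinuous x _ _ ε hε := by
    obtain ⟨δ, hδ, hfx⟩ := Metric.continuous_iff.1 hf x ε hε
    refine ⟨δ, hδ, fun _ x' _ _ hx _ => ?_⟩
    rw [← Real.dist_eq, dist_comm]
    exact hfx x' (by rwa [dist_comm])
  differentiableDeriv :=
    ⟨fun _ _ _ => 0, fun _ _ _ _ => hasFDerivWithinAt_const _ _ _, ⟨0, by simp⟩,
      fun _ _ _ ε hε => ⟨1, one_pos, fun _ _ _ _ _ _ => by simpa using hε⟩⟩

lemma oosGuarantee_cR (ℓ : X → Fin d → ℝ) (a : ℕ → ℝ) :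
    OOSGuarantee ℓ a (fun x (_ : Fin d → ℝ) (_ : ℕ) => cR ℓ x) :=
  fun x _ hP _ _ => Eventually.of_forall fun _ =>
    (probT_eq_zero fun _ => (cost_le_cR ℓ x (simplexInt_subset_simplex hP)).not_gt).trans_le
      (Real.exp_pos _).le

lemma eventually_exp_neg_mul_lt_pow {a : ℕ → ℝ}
    (ha : Tendsto (fun T : ℕ => a T / T) atTop atTop) {c p : ℝ} (hc : 0 < c) (hp : 0 < p) :
    ∀ᶠ T : ℕ in atTop, Real.exp (-c * a T) < p ^ T := by
  filter_upwards [ha.eventually_gt_atTop (-Real.log p / c), eventually_gt_atTop 0] with T hT hT0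
  rw [div_lt_div_iff₀ hc (Nat.cast_pos.2 hT0)] at hT
  rw [← Real.exp_log (pow_pos hp T), Real.log_pow, Real.exp_lt_exp]
  linarith

lemma OOSGuarantee.eventually_cost_le {ℓ : X → Fin d → ℝ} {a : ℕ → ℝ}
    {chat : X → (Fin d → ℝ) → ℕ → ℝ} (hoos : OOSGuarantee ℓ a chat)
    (ha : Tendsto (fun T : ℕ => a T / T) atTop atTop) (x : X) {P : Fin d → ℝ}
    (hP : P ∈ simplexInt d) :
    ∀ᶠ T : ℕ in atTop, ∀ ω : Fin T → Fin d, cost ℓ x P ≤ chat x (empDist ω) T := by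
  obtain ⟨p, hp, hpP⟩ := exists_pos_le_of_mem_simplexInt hP
  filter_upwards [hoos x P hP (1 / 2) (by norm_num),
    eventually_exp_neg_mul_lt_pow ha (c := 1 / 2) (by norm_num) hp] with T hprob hexp ω
  by_contra! h
  have hlow := pow_le_probT hp.le hpP (A := fun ω => cost ℓ x P > chat x (empDist ω) T) h
  norm_num at hprob hexp
  linarith

lemma IsRegularPredictor.eventually_cR_sub_le [MetricSpace X] {ℓ : X → Fin d → ℝ}
    {a : ℕ → ℝ} {chat : X → (Fin d → ℝ) → ℕ → ℝ} (hreg : IsRegularPredictor d chat)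
    (hoos : OOSGuarantee ℓ a chat) (ha : Tendsto (fun T : ℕ => a T / T) atTop atTop) (x : X)
    {P : Fin d → ℝ} (hP : P ∈ simplexInt d) {η : ℝ} (hη : 0 < η) :
    ∀ᶠ T : ℕ in atTop, cR ℓ x - η ≤ chat x P T := by
  obtain ⟨P', hP', hcost⟩ := exists_mem_simplexInt_cR_sub_lt_cost ℓ x hP (half_pos hη)
  obtain ⟨δ, hδ, hchat⟩ :=
    hreg.equicontinuous x P (simplexInt_subset_simplex hP) (η / 2) (half_pos hη)
  filter_upwards [hoos.eventually_cost_le ha x hP',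
    tendsto_one_div_atTop_nhds_zero_nat.eventually_lt_const hδ, eventually_gt_atTop 0]
    with T hle hTδ hT
  obtain ⟨ω, hω⟩ := exists_dist_empDist_le hT (simplexInt_subset_simplex hP)
  have hclose := hchat T x (empDist ω) (empDist_mem_simplex hT ω) (by simpa using hδ)
    (hω.trans_lt hTδ)
  linarith [(abs_lt.1 hclose).1, hle ω]

lemma ratio_le_of_le_mul {u v ε : ℝ} (hu : 0 ≤ u) (hv : 0 ≤ v) (hε : 0 ≤ ε)
    (h : u ≤ (1 + ε) * v) : ratio u v ≤ 1 + ε := by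
  rcases hv.eq_or_lt with rfl | hv
  · rw [ratio, if_pos ⟨le_antisymm (by simpa using h) hu, rfl⟩]
    linarith
  · rw [ratio, if_neg fun h => hv.ne' h.2, div_le_iff₀ hv]
    linarith

lemma predOrder_cR [MetricSpace X] {ℓ : X → Fin d → ℝ} {a : ℕ → ℝ}
    (ha : Tendsto (fun T : ℕ => a T / T) atTop atTop) {chat : X → (Fin d → ℝ) → ℕ → ℝ}
    (hreg : IsRegularPredictor d chat) (hoos : OOSGuarantee ℓ a chat) :
    PredOrder ℓ (fun x (_ : Fin d → ℝ) (_ : ℕ) => cR ℓ x) chat := by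
  intro x P hP ε hε
  set e := cR ℓ x - cost ℓ x P with he_def
  have he : 0 ≤ e := sub_nonneg.2 (cost_le_cR ℓ x (simplexInt_subset_simplex hP))
  suffices ∀ᶠ T in atTop, e ≤ (1 + ε) * predErr ℓ chat x P T by
    filter_upwards [this] with T hT
    exact ratio_le_of_le_mul (abs_nonneg _) (abs_nonneg _) hε.le
      ((abs_of_nonneg he).trans_le hT)
  rcases he.eq_or_lt with he0 | he0
  · exact Eventually.of_forall fun T => by
      rw [← he0]
      exact mul_nonneg (by linarith) (abs_nonneg _)
  · filter_upwards [hreg.eventually_cR_sub_le hoos ha x hP (η := ε * e / (1 + ε)) (by positivity)]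
      with T hT
    calc e = (1 + ε) * (e - ε * e / (1 + ε)) := by field_simp; ring
      _ ≤ (1 + ε) * (chat x P T - cost ℓ x P) :=
        mul_le_mul_of_nonneg_left (by linarith) (by linarith)
      _ ≤ (1 + ε) * predErr ℓ chat x P T := by gcongr; exact le_abs_self _

end Predictor

theorem stmt_2_general {X : Type*} [MetricSpace X] [CompactSpace X] {d : ℕ}
    (ℓ : X → Fin d → ℝ) (hℓ : ∀ i, Continuous fun x => ℓ x i)
    (a : ℕ → ℝ)
    (ha_sup : Tendsto (fun T : ℕ => a T / (T : ℝ)) atTop atTop) :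
    IsRegularPredictor d (fun x (_ : Fin d → ℝ) (_ : ℕ) => cR ℓ x) ∧
      OOSGuarantee ℓ a (fun x (_ : Fin d → ℝ) (_ : ℕ) => cR ℓ x) ∧
      ∀ chat : X → (Fin d → ℝ) → ℕ → ℝ,
        IsRegularPredictor d chat → OOSGuarantee ℓ a chat →
          PredOrder ℓ (fun x (_ : Fin d → ℝ) (_ : ℕ) => cR ℓ x) chat :=
  ⟨isRegularPredictor_const (continuous_cR ℓ hℓ), oosGuarantee_cR ℓ a,
    fun _ hreg hoos => predOrder_cR ha_sup hreg hoos⟩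

/-- In the superexponential regime (`a_T/T → ∞`), the robust predictor
`ĉ_R(x) = max_{i∈Σ} ℓ(x,i)` is a regular predictor satisfying the out-of-sample
guarantee and is preferred (`⪯_𝒞`) to every regular predictor satisfying it:
it is a strongly optimal predictor. -/
theorem stmt_2 {X : Type*} [MetricSpace X] [CompactSpace X] {d : ℕ}
    (ℓ : X → Fin d → ℝ) (hℓ : ∀ i, Continuous fun x => ℓ x i)
    (a : ℕ → ℝ) (ha_pos : ∀ T, 0 < a T)
    (ha_top : Tendsto a atTop atTop)
    (ha_sup : Tendsto (fun T : ℕ => a T / (T : ℝ)) atTop atTop) :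
    IsRegularPredictor d (fun x (_ : Fin d → ℝ) (_ : ℕ) => cR ℓ x) ∧
      OOSGuarantee ℓ a (fun x (_ : Fin d → ℝ) (_ : ℕ) => cR ℓ x) ∧
      ∀ chat : X → (Fin d → ℝ) → ℕ → ℝ,
        IsRegularPredictor d chat → OOSGuarantee ℓ a chat →
          PredOrder ℓ (fun x (_ : Fin d → ℝ) (_ : ℕ) => cR ℓ x) chat :=
  stmt_2_general ℓ hℓ a ha_sup

end DDO
end

section
/- Consider the subexponential regime in which a_T → ∞ and a_T/T → 0. Every weakly optimal regular predictor is consistent: for every regular predictor ĉ ∈ 𝒞 satisfying the out-of-sample guarantee, either ĉ(x,P,T) → c(x,P) as T → ∞ for every x ∈ 𝒳 and P ∈ 𝒫, or there exists a regular predictor ĉ' ∈ 𝒞 satisfying the out-of-sample guarantee with ĉ' ⪯_𝒞 ĉ and ĉ' ≢ ĉ. -/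
open Filter Asymptotics

namespace DDO

/-!
If `ĉ` is not consistent, equicontinuity and the density of `𝒫°` in `𝒫` give an interior point
`(x₀, P₀)` and `δ > 0` with `|ĉ(x₀,P₀,T) - c(x₀,P₀)| ≥ δ` for infinitely many `T`. Replace `ĉ` by
`ĉ' = c + ψ(ĉ - c)`, where `ψ = clip (δ/4)` is odd, `C¹` with uniformly continuous derivative,
the identity on `[-δ/4, δ/4]`, bounded by `δ/2`, and satisfies `|ψ s| ≤ |s|` and
`ψ s ≥ min s (δ/4)`. Then `ĉ'` is regular, its errors never exceed those of `ĉ`, and at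
`(x₀, P₀)` they stay below `δ/2`, so `ĉ' ≢ ĉ`. A disappointment of `ĉ'` is one of `ĉ` unless the
empirical cost undershoots the true cost by `δ/4`; by Chernoff's bound this has probability
`e^{-cT}`, which is negligible at the subexponential speed `a_T`.
-/

open Real

section Clip

variable {A : ℝ}

noncomputable def cap (A s : ℝ) : ℝ := if s ≤ A then s else 2 * A - A * exp (1 - s / A)

noncomputable def capDeriv (A s : ℝ) : ℝ := exp (min (1 - s / A) 0)

/-- The odd extension of `cap`: the identity on `[-A, A]`, with values in `(-2A, 2A)`. -/
noncomputable def clip (A s : ℝ) : ℝ := cap A (-cap A (-s))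

theorem cap_of_le {s : ℝ} (h : s ≤ A) : cap A s = s := if_pos h

theorem capDeriv_of_le (hA : 0 < A) {s : ℝ} (h : s ≤ A) : capDeriv A s = 1 := by
  have : 0 ≤ 1 - s / A := sub_nonneg.2 ((div_le_one hA).2 h)
  simp [capDeriv, min_eq_right this]

theorem cap_le_self (hA : 0 < A) (s : ℝ) : cap A s ≤ s := by
  unfold cap
  split_ifs with h
  · exact le_rfl
  · have h1 := add_one_le_exp (1 - s / A)
    have h2 : A * (1 - s / A + 1) = 2 * A - s := by field_simp; ring
    nlinarith

theorem cap_le_two_mul (hA : 0 < A) (s : ℝ) : cap A s ≤ 2 * A := by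
  unfold cap
  split_ifs with h
  · linarith
  · nlinarith [exp_pos (1 - s / A)]

theorem min_le_cap (hA : 0 < A) (s : ℝ) : min s A ≤ cap A s := by
  unfold cap
  split_ifs with h
  · exact min_le_left _ _
  · have : exp (1 - s / A) ≤ 1 :=
      exp_le_one_iff.2 (sub_nonpos.2 ((one_le_div hA).2 (not_le.1 h).le))
    nlinarith [min_le_right s A]

theorem hasDerivAt_cap (hA : 0 < A) (s : ℝ) : HasDerivAt (cap A) (capDeriv A s) s := by
  refine hasDerivAt_of_hasDerivAt_of_ne' (x := A) (fun y hy => ?_) ?_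
    (by unfold capDeriv; fun_prop) s
  · rcases hy.lt_or_gt with hy | hy
    · rw [capDeriv_of_le hA hy.le]
      refine (hasDerivAt_id y).congr_of_eventuallyEq ?_
      filter_upwards [Iio_mem_nhds hy] with t ht using cap_of_le (le_of_lt ht)
    · have hmin : min (1 - y / A) 0 = 1 - y / A :=
        min_eq_left (sub_nonpos.2 ((one_le_div hA).2 hy.le))
      have hd : HasDerivAt (fun t => 2 * A - A * exp (1 - t / A)) (capDeriv A y) y := by
        rw [capDeriv, hmin]
        refine ((((hasDerivAt_id' y).div_const A).const_sub 1).exp.const_mul A).const_sub (2 * A)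
          |>.congr_deriv ?_
        field_simp
      refine hd.congr_of_eventuallyEq ?_
      filter_upwards [Ioi_mem_nhds hy] with t ht using if_neg (not_le.2 ht)
  · refine (Continuous.if_le continuous_id (by fun_prop) continuous_id continuous_const
      fun t ht => ?_).continuousAt
    simp only [id] at ht ⊢
    subst ht
    simp only [div_self hA.ne', sub_self, exp_zero, mul_one]
    ring

theorem capDeriv_nonneg (s : ℝ) : 0 ≤ capDeriv A s := (exp_pos _).le

theorem capDeriv_le_one (s : ℝ) : capDeriv A s ≤ 1 := exp_le_one_iff.2 (min_le_right _ _)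

theorem lipschitzWith_cap (hA : 0 < A) : LipschitzWith 1 (cap A) := by
  refine lipschitzWith_of_nnnorm_deriv_le (fun s => (hasDerivAt_cap hA s).differentiableAt)
    fun s => ?_
  rw [(hasDerivAt_cap hA s).deriv, ← NNReal.coe_le_coe, coe_nnnorm, Real.norm_eq_abs,
    abs_of_nonneg (capDeriv_nonneg s)]
  exact capDeriv_le_one s

theorem abs_exp_sub_exp_le_of_nonpos {u v : ℝ} (hu : u ≤ 0) (hv : v ≤ 0) :
    |exp u - exp v| ≤ |u - v| := by
  wlog h : v ≤ u generalizing u v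
  · rw [abs_sub_comm, abs_sub_comm u]
    exact this hv hu (le_of_not_ge h)
  rw [abs_of_nonneg (sub_nonneg.2 (exp_le_exp.2 h)), abs_of_nonneg (sub_nonneg.2 h)]
  have h1 : exp v = exp u * exp (v - u) := by rw [← exp_add]; ring_nf
  nlinarith [add_one_le_exp (v - u), exp_le_one_iff.2 hu, exp_pos u]

theorem lipschitzWith_capDeriv (hA : 0 < A) :
    LipschitzWith (Real.toNNReal A⁻¹) (capDeriv A) := by
  refine LipschitzWith.of_dist_le_mul fun s t => ?_
  rw [Real.coe_toNNReal _ (inv_nonneg.2 hA.le), Real.dist_eq, Real.dist_eq]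
  calc |capDeriv A s - capDeriv A t|
      ≤ |min (1 - s / A) 0 - min (1 - t / A) 0| :=
        abs_exp_sub_exp_le_of_nonpos (min_le_right _ _) (min_le_right _ _)
    _ ≤ |(1 - s / A) - (1 - t / A)| := by
        simpa using abs_min_sub_min_le_max (1 - s / A) 0 (1 - t / A) 0
    _ = A⁻¹ * |s - t| := by
        rw [show (1 - s / A) - (1 - t / A) = A⁻¹ * -(s - t) by ring, abs_mul, abs_neg,
          abs_of_pos (inv_pos.2 hA)]

theorem min_le_clip (hA : 0 < A) (s : ℝ) : min s A ≤ clip A s :=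
  (min_le_min_right A (le_neg.2 (cap_le_self hA (-s)))).trans (min_le_cap hA _)

theorem abs_clip_le_two_mul (hA : 0 < A) (s : ℝ) : |clip A s| ≤ 2 * A := by
  have h1 := min_le_cap hA (-cap A (-s))
  have h2 := cap_le_two_mul hA (-s)
  refine abs_le.2 ⟨?_, cap_le_two_mul hA _⟩
  exact (le_min (by linarith) (by linarith)).trans h1

theorem lipschitzWith_clip (hA : 0 < A) : LipschitzWith 1 (clip A) := by
  have h := (lipschitzWith_cap hA).comp ((lipschitzWith_cap hA).comp LipschitzWith.id.neg).neg
  rwa [mul_one, mul_one] at h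

theorem abs_clip_le (hA : 0 < A) (s : ℝ) : |clip A s| ≤ |s| := by
  have h0 : clip A 0 = 0 := by simp [clip, cap_of_le hA.le]
  simpa [h0, Real.dist_eq] using (lipschitzWith_clip hA).dist_le_mul s 0

theorem hasDerivAt_clip (hA : 0 < A) (s : ℝ) : HasDerivAt (clip A) (capDeriv A |s|) s := by
  have h := (hasDerivAt_cap hA _).comp s
    ((hasDerivAt_cap hA (-s)).comp s (hasDerivAt_neg s)).neg
  refine h.congr_deriv ?_
  simp only [Pi.neg_apply, Function.comp_apply]
  rcases le_or_gt (-s) A with hs | hs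
  · rw [cap_of_le hs, neg_neg, capDeriv_of_le hA hs]
    rcases le_or_gt s A with hs' | hs'
    · rw [capDeriv_of_le hA hs', capDeriv_of_le hA (abs_le.2 ⟨by linarith, hs'⟩)]
      ring
    · rw [abs_of_pos (hA.trans hs')]
      ring
  · have : -cap A (-s) ≤ A := by
      linarith [min_le_cap hA (-s), min_eq_right hs.le]
    rw [capDeriv_of_le hA this, abs_of_neg (by linarith)]
    ring

end Clip

section Regular

def BoundedOnSimplex {X E : Type*} [Norm E] {d : ℕ} (F : X → (Fin d → ℝ) → ℕ → E) : Prop :=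
  ∃ K : ℝ, ∀ (T : ℕ) (x : X), ∀ P ∈ simplex d, ‖F x P T‖ ≤ K

def EquicontinuousOnSimplex {X E : Type*} [PseudoMetricSpace X] [PseudoMetricSpace E] {d : ℕ}
    (F : X → (Fin d → ℝ) → ℕ → E) : Prop :=
  ∀ (x : X), ∀ P ∈ simplex d, ∀ ε > (0 : ℝ), ∃ δ > (0 : ℝ),
    ∀ (T : ℕ) (x' : X), ∀ P' ∈ simplex d,
      dist x x' < δ → dist P P' < δ → dist (F x P T) (F x' P' T) < ε

section Bounded

variable {X E E' : Type*} {d : ℕ} [SeminormedAddCommGroup E]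

theorem BoundedOnSimplex.add {F G : X → (Fin d → ℝ) → ℕ → E} (hF : BoundedOnSimplex F)
    (hG : BoundedOnSimplex G) : BoundedOnSimplex fun x P T => F x P T + G x P T := by
  obtain ⟨K₁, h₁⟩ := hF
  obtain ⟨K₂, h₂⟩ := hG
  exact ⟨K₁ + K₂, fun T x P hP =>
    (norm_add_le _ _).trans (add_le_add (h₁ T x P hP) (h₂ T x P hP))⟩

theorem BoundedOnSimplex.sub {F G : X → (Fin d → ℝ) → ℕ → E} (hF : BoundedOnSimplex F)
    (hG : BoundedOnSimplex G) : BoundedOnSimplex fun x P T => F x P T - G x P T := by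
  obtain ⟨K₁, h₁⟩ := hF
  obtain ⟨K₂, h₂⟩ := hG
  exact ⟨K₁ + K₂, fun T x P hP =>
    (norm_sub_le _ _).trans (add_le_add (h₁ T x P hP) (h₂ T x P hP))⟩

theorem BoundedOnSimplex.comp_lipschitzWith [SeminormedAddCommGroup E']
    {F : X → (Fin d → ℝ) → ℕ → E} {φ : E → E'} {K : NNReal} (hφ : LipschitzWith K φ)
    (hF : BoundedOnSimplex F) : BoundedOnSimplex fun x P T => φ (F x P T) := by
  obtain ⟨C, hC⟩ := hF
  refine ⟨‖φ 0‖ + K * C, fun T x P hP => ?_⟩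
  calc ‖φ (F x P T)‖ ≤ ‖φ 0‖ + ‖φ (F x P T) - φ 0‖ := norm_le_insert' _ _
    _ ≤ ‖φ 0‖ + K * ‖F x P T‖ := by
        simpa [dist_eq_norm] using hφ.dist_le_mul (F x P T) 0
    _ ≤ ‖φ 0‖ + K * C := by gcongr; exact hC T x P hP

theorem BoundedOnSimplex.smul [NormedSpace ℝ E] {f : X → (Fin d → ℝ) → ℕ → ℝ}
    {F : X → (Fin d → ℝ) → ℕ → E} (hf : BoundedOnSimplex f) (hF : BoundedOnSimplex F) :
    BoundedOnSimplex fun x P T => f x P T • F x P T := by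
  obtain ⟨K₁, h₁⟩ := hf
  obtain ⟨K₂, h₂⟩ := hF
  refine ⟨max K₁ 0 * K₂, fun T x P hP => ?_⟩
  rw [norm_smul]
  exact mul_le_mul ((h₁ T x P hP).trans (le_max_left _ _)) (h₂ T x P hP) (norm_nonneg _)
    (le_max_right _ _)

theorem BoundedOnSimplex.of_continuous [TopologicalSpace X] [CompactSpace X]
    {f : X → (Fin d → ℝ) → E} (hf : Continuous (Function.uncurry f)) :
    BoundedOnSimplex fun x P (_ : ℕ) => f x P := by
  obtain ⟨K, hK⟩ := IsCompact.exists_bound_of_continuousOn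
    (isCompact_univ.prod (isCompact_stdSimplex ℝ (Fin d))) hf.continuousOn
  exact ⟨K, fun _ x P hP => hK (x, P) ⟨Set.mem_univ x, hP⟩⟩

end Bounded

open Topology in
theorem simplex_subset_closure_simplexInt (d : ℕ) : simplex d ⊆ closure (simplexInt d) := by
  intro P hP
  have hd : (0 : ℝ) < d := by
    rcases Nat.eq_zero_or_pos d with rfl | hd
    · simp [simplex] at hP
    · exact Nat.cast_pos.2 hd
  have hpath : Tendsto (fun θ : ℝ => P + θ • ((fun _ => 1 / (d : ℝ)) - P)) (𝓝[>] 0) (𝓝 P) := by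
    have : Continuous fun θ : ℝ => P + θ • ((fun _ => 1 / (d : ℝ)) - P) := by fun_prop
    simpa using tendsto_nhdsWithin_of_tendsto_nhds (this.tendsto 0)
  refine mem_closure_of_tendsto hpath (Filter.mem_of_superset (Ioo_mem_nhdsGT one_pos)
    fun θ hθ => ⟨fun i => ?_, ?_⟩)
  · have : 0 < θ * (1 / d) := mul_pos hθ.1 (by positivity)
    simp only [Pi.add_apply, Pi.smul_apply, Pi.sub_apply, smul_eq_mul]
    nlinarith [hP.1 i, hθ.2]
  · simp only [Pi.add_apply, Pi.smul_apply, Pi.sub_apply, smul_eq_mul, Finset.sum_add_distrib,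
      ← Finset.mul_sum, Finset.sum_sub_distrib, hP.2, Finset.sum_const, Finset.card_univ,
      Fintype.card_fin, nsmul_eq_mul]
    field_simp
    ring

section Equicontinuous

variable {X E₁ E₂ E : Type*} [PseudoMetricSpace X] {d : ℕ}

theorem EquicontinuousOnSimplex.of_dist_le [PseudoMetricSpace E₁] [PseudoMetricSpace E₂]
    [PseudoMetricSpace E] {F : X → (Fin d → ℝ) → ℕ → E₁} {G : X → (Fin d → ℝ) → ℕ → E₂}
    {H : X → (Fin d → ℝ) → ℕ → E} (hF : EquicontinuousOnSimplex F)
    (hG : EquicontinuousOnSimplex G) {a b : ℝ} (ha : 0 ≤ a) (hb : 0 ≤ b)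
    (hH : ∀ (T : ℕ) (x x' : X), ∀ P ∈ simplex d, ∀ P' ∈ simplex d,
      dist (H x P T) (H x' P' T) ≤
        a * dist (F x P T) (F x' P' T) + b * dist (G x P T) (G x' P' T)) :
    EquicontinuousOnSimplex H := by
  intro x P hP ε hε
  have small : ∀ t : ℝ, 0 ≤ t → t * (ε / (2 * (t + 1))) < ε / 2 := fun t ht => by
    rw [mul_div_assoc', div_lt_div_iff₀ (by positivity) two_pos]
    nlinarith
  obtain ⟨δ₁, hδ₁, h₁⟩ := hF x P hP (ε / (2 * (a + 1))) (by positivity)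
  obtain ⟨δ₂, hδ₂, h₂⟩ := hG x P hP (ε / (2 * (b + 1))) (by positivity)
  refine ⟨min δ₁ δ₂, lt_min hδ₁ hδ₂, fun T x' P' hP' hx hPP' => ?_⟩
  have e₁ := h₁ T x' P' hP' (hx.trans_le (min_le_left _ _)) (hPP'.trans_le (min_le_left _ _))
  have e₂ := h₂ T x' P' hP' (hx.trans_le (min_le_right _ _)) (hPP'.trans_le (min_le_right _ _))
  calc dist (H x P T) (H x' P' T)
      ≤ a * dist (F x P T) (F x' P' T) + b * dist (G x P T) (G x' P' T) :=
        hH T x x' P hP P' hP'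
    _ ≤ a * (ε / (2 * (a + 1))) + b * (ε / (2 * (b + 1))) := by gcongr
    _ < ε := by linarith [small a ha, small b hb]

theorem EquicontinuousOnSimplex.add [SeminormedAddCommGroup E]
    {F G : X → (Fin d → ℝ) → ℕ → E} (hF : EquicontinuousOnSimplex F)
    (hG : EquicontinuousOnSimplex G) : EquicontinuousOnSimplex fun x P T => F x P T + G x P T :=
  hF.of_dist_le hG zero_le_one zero_le_one fun _ _ _ _ _ _ _ => by
    simpa only [one_mul] using dist_add_add_le _ _ _ _

theorem EquicontinuousOnSimplex.sub [SeminormedAddCommGroup E]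
    {F G : X → (Fin d → ℝ) → ℕ → E} (hF : EquicontinuousOnSimplex F)
    (hG : EquicontinuousOnSimplex G) : EquicontinuousOnSimplex fun x P T => F x P T - G x P T :=
  hF.of_dist_le hG zero_le_one zero_le_one fun _ _ _ _ _ _ _ => by
    simpa only [one_mul] using dist_sub_sub_le _ _ _ _

theorem EquicontinuousOnSimplex.smul [SeminormedAddCommGroup E] [NormedSpace ℝ E]
    {f : X → (Fin d → ℝ) → ℕ → ℝ} {F : X → (Fin d → ℝ) → ℕ → E}
    (hf : EquicontinuousOnSimplex f) (hF : EquicontinuousOnSimplex F)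
    (hf_bdd : BoundedOnSimplex f) (hF_bdd : BoundedOnSimplex F) :
    EquicontinuousOnSimplex fun x P T => f x P T • F x P T := by
  obtain ⟨K₁, h₁⟩ := hf_bdd
  obtain ⟨K₂, h₂⟩ := hF_bdd
  refine hf.of_dist_le hF (le_max_right K₂ 0) (le_max_right K₁ 0) fun T x x' P hP P' hP' => ?_
  have hK₂ : ‖F x P T‖ ≤ max K₂ 0 := (h₂ T x P hP).trans (le_max_left _ _)
  have hK₁ : ‖f x' P' T‖ ≤ max K₁ 0 := (h₁ T x' P' hP').trans (le_max_left _ _)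
  rw [dist_eq_norm, dist_eq_norm, dist_eq_norm,
    show f x P T • F x P T - f x' P' T • F x' P' T
      = (f x P T - f x' P' T) • F x P T + f x' P' T • (F x P T - F x' P' T) by
        rw [sub_smul, smul_sub]; abel]
  refine (norm_add_le _ _).trans ?_
  rw [norm_smul, norm_smul, mul_comm (max K₂ 0)]
  gcongr

theorem EquicontinuousOnSimplex.comp_uniformContinuous [PseudoMetricSpace E₁]
    [PseudoMetricSpace E] {F : X → (Fin d → ℝ) → ℕ → E₁} {φ : E₁ → E}
    (hφ : UniformContinuous φ) (hF : EquicontinuousOnSimplex F) :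
    EquicontinuousOnSimplex fun x P T => φ (F x P T) := by
  intro x P hP ε hε
  obtain ⟨η, hη, hφη⟩ := Metric.uniformContinuous_iff.1 hφ ε hε
  obtain ⟨δ, hδ, hFδ⟩ := hF x P hP η hη
  exact ⟨δ, hδ, fun T x' P' hP' hx hPP' => hφη (hFδ T x' P' hP' hx hPP')⟩

theorem EquicontinuousOnSimplex.of_continuous [PseudoMetricSpace E] {f : X → (Fin d → ℝ) → E}
    (hf : Continuous (Function.uncurry f)) :
    EquicontinuousOnSimplex fun x P (_ : ℕ) => f x P := by
  intro x P _ ε hε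
  obtain ⟨δ, hδ, h⟩ := Metric.continuous_iff.1 hf (x, P) ε hε
  refine ⟨δ, hδ, fun _ x' P' _ hx hPP' => ?_⟩
  rw [dist_comm]
  exact h (x', P') (by rw [Prod.dist_eq, dist_comm x', dist_comm P']; exact max_lt hx hPP')

theorem EquicontinuousOnSimplex.tendsto_of_tendsto_simplexInt {F : X → (Fin d → ℝ) → ℕ → ℝ}
    (hF : EquicontinuousOnSimplex F)
    (h : ∀ (x : X), ∀ P ∈ simplexInt d, Tendsto (F x P) atTop (nhds 0)) :
    ∀ (x : X), ∀ P ∈ simplex d, Tendsto (F x P) atTop (nhds 0) := by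
  intro x P hP
  refine Metric.tendsto_nhds.2 fun ε hε => ?_
  obtain ⟨δ, hδ, hFδ⟩ := hF x P hP (ε / 2) (half_pos hε)
  obtain ⟨P', hP', hPP'⟩ :=
    Metric.mem_closure_iff.1 (simplex_subset_closure_simplexInt d hP) δ hδ
  filter_upwards [Metric.tendsto_nhds.1 (h x P' hP') (ε / 2) (half_pos hε)] with T hT
  have := hFδ T x P' ⟨fun i => (hP'.1 i).le, hP'.2⟩ (by rwa [dist_self]) hPP'
  linarith [dist_triangle (F x P T) (F x P' T) 0]

end Equicontinuous

noncomputable def costCLM {X : Type*} {d : ℕ} (ℓ : X → Fin d → ℝ) (x : X) :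
    (Fin d → ℝ) →L[ℝ] ℝ :=
  ∑ i, ℓ x i • ContinuousLinearMap.proj i

theorem costCLM_apply {X : Type*} {d : ℕ} (ℓ : X → Fin d → ℝ) (x : X) (Q : Fin d → ℝ) :
    costCLM ℓ x Q = cost ℓ x Q := by
  simp [costCLM, cost]

theorem continuous_uncurry_cost {X : Type*} [TopologicalSpace X] {d : ℕ} {ℓ : X → Fin d → ℝ}
    (hℓ : ∀ i, Continuous fun x => ℓ x i) : Continuous (Function.uncurry (cost ℓ)) := by
  unfold Function.uncurry cost
  fun_prop

variable {X : Type*} [MetricSpace X] {d : ℕ}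

theorem isRegularPredictor_iff {c : X → (Fin d → ℝ) → ℕ → ℝ} :
    IsRegularPredictor d c ↔ BoundedOnSimplex c ∧ EquicontinuousOnSimplex c ∧
      ∃ D : X → (Fin d → ℝ) → ℕ → ((Fin d → ℝ) →L[ℝ] ℝ),
        (∀ (T : ℕ) (x : X), ∀ P ∈ simplex d,
          HasFDerivWithinAt (fun Q => c x Q T) (D x P T) (simplex d) P) ∧
        BoundedOnSimplex D ∧ EquicontinuousOnSimplex D := by
  simp only [BoundedOnSimplex, EquicontinuousOnSimplex, dist_eq_norm, Real.norm_eq_abs]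
  exact ⟨fun ⟨h₁, h₂, h₃⟩ => ⟨h₁, h₂, h₃⟩, fun ⟨h₁, h₂, h₃⟩ => ⟨h₁, h₂, h₃⟩⟩

theorem IsRegularPredictor.add {c₁ c₂ : X → (Fin d → ℝ) → ℕ → ℝ} (h₁ : IsRegularPredictor d c₁)
    (h₂ : IsRegularPredictor d c₂) : IsRegularPredictor d fun x P T => c₁ x P T + c₂ x P T := by
  obtain ⟨hb₁, he₁, D₁, hD₁, hDb₁, hDe₁⟩ := isRegularPredictor_iff.1 h₁
  obtain ⟨hb₂, he₂, D₂, hD₂, hDb₂, hDe₂⟩ := isRegularPredictor_iff.1 h₂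
  exact isRegularPredictor_iff.2 ⟨hb₁.add hb₂, he₁.add he₂, fun x P T => D₁ x P T + D₂ x P T,
    fun T x P hP => (hD₁ T x P hP).add (hD₂ T x P hP), hDb₁.add hDb₂, hDe₁.add hDe₂⟩

theorem IsRegularPredictor.sub {c₁ c₂ : X → (Fin d → ℝ) → ℕ → ℝ} (h₁ : IsRegularPredictor d c₁)
    (h₂ : IsRegularPredictor d c₂) : IsRegularPredictor d fun x P T => c₁ x P T - c₂ x P T := by
  obtain ⟨hb₁, he₁, D₁, hD₁, hDb₁, hDe₁⟩ := isRegularPredictor_iff.1 h₁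
  obtain ⟨hb₂, he₂, D₂, hD₂, hDb₂, hDe₂⟩ := isRegularPredictor_iff.1 h₂
  exact isRegularPredictor_iff.2 ⟨hb₁.sub hb₂, he₁.sub he₂, fun x P T => D₁ x P T - D₂ x P T,
    fun T x P hP => (hD₁ T x P hP).sub (hD₂ T x P hP), hDb₁.sub hDb₂, hDe₁.sub hDe₂⟩

theorem IsRegularPredictor.comp {c : X → (Fin d → ℝ) → ℕ → ℝ} {φ φ' : ℝ → ℝ} {K : NNReal}
    (hφ : ∀ s, HasDerivAt φ (φ' s) s) (hφ_lip : LipschitzWith K φ) (hφ' : UniformContinuous φ')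
    (hc : IsRegularPredictor d c) : IsRegularPredictor d fun x P T => φ (c x P T) := by
  obtain ⟨hb, he, D, hD, hDb, hDe⟩ := isRegularPredictor_iff.1 hc
  have hφ'c : BoundedOnSimplex fun x P T => φ' (c x P T) :=
    ⟨K, fun _ _ _ _ => (hφ _).le_of_lipschitz hφ_lip⟩
  exact isRegularPredictor_iff.2 ⟨hb.comp_lipschitzWith hφ_lip,
    he.comp_uniformContinuous hφ_lip.uniformContinuous, fun x P T => φ' (c x P T) • D x P T,
    fun T x P hP => (hφ _).comp_hasFDerivWithinAt P (hD T x P hP), hφ'c.smul hDb,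
    (he.comp_uniformContinuous hφ').smul hDe hφ'c hDb⟩

theorem isRegularPredictor_of_continuous [CompactSpace X] {f : X → (Fin d → ℝ) → ℝ}
    {Df : X → (Fin d → ℝ) → (Fin d → ℝ) →L[ℝ] ℝ} (hf : Continuous (Function.uncurry f))
    (hDf : Continuous (Function.uncurry Df)) (hfDf : ∀ x P, HasFDerivAt (f x) (Df x P) P) :
    IsRegularPredictor d fun x P _ => f x P :=
  isRegularPredictor_iff.2 ⟨.of_continuous hf, .of_continuous hf, fun x P _ => Df x P,
    fun _ x P _ => (hfDf x P).hasFDerivWithinAt, .of_continuous hDf, .of_continuous hDf⟩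

theorem isRegularPredictor_cost [CompactSpace X] {ℓ : X → Fin d → ℝ}
    (hℓ : ∀ i, Continuous fun x => ℓ x i) : IsRegularPredictor d fun x P _ => cost ℓ x P := by
  refine isRegularPredictor_of_continuous (Df := fun x _ => costCLM ℓ x)
    (continuous_uncurry_cost hℓ) ?_ fun x P => ?_
  · unfold Function.uncurry costCLM
    fun_prop
  · rw [← show ⇑(costCLM ℓ x) = cost ℓ x from funext (costCLM_apply ℓ x)]
    exact (costCLM ℓ x).hasFDerivAt

end Regular

section Probability

variable {d : ℕ} {P : Fin d → ℝ}

theorem probT_le_add_of_imp (hP : ∀ i, 0 ≤ P i) {T : ℕ} {E E₁ E₂ : (Fin T → Fin d) → Prop}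
    (h : ∀ ω, E ω → E₁ ω ∨ E₂ ω) : probT P T E ≤ probT P T E₁ + probT P T E₂ := by
  classical
  rw [probT, probT, probT, ← Finset.sum_add_distrib]
  refine Finset.sum_le_sum fun ω _ => ?_
  have := Finset.prod_nonneg fun t (_ : t ∈ Finset.univ) => hP (ω t)
  split_ifs with h₀ h₁ h₂ <;> first | linarith | exact absurd (h ω h₀) (by tauto)

theorem cost_empDist {X : Type*} (ℓ : X → Fin d → ℝ) (x : X) {T : ℕ} (ω : Fin T → Fin d) :
    cost ℓ x (empDist ω) = (∑ t, ℓ x (ω t)) / T := by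
  classical
  simp only [cost, empDist, mul_div_assoc', ← Finset.sum_div,
    ← Finset.sum_fiberwise' Finset.univ ω (ℓ x), Finset.sum_const, nsmul_eq_mul, mul_comm]

theorem probT_lt_sum_le (hP : ∀ i, 0 ≤ P i) (g : Fin d → ℝ) {t : ℝ} (ht : 0 ≤ t) (T : ℕ)
    (r : ℝ) :
    probT P T (fun ω => r < ∑ s, g (ω s)) ≤ exp (-(t * r)) * (∑ i, P i * exp (t * g i)) ^ T := by
  classical
  rw [Fintype.sum_pow, Finset.mul_sum, probT]
  refine Finset.sum_le_sum fun ω _ => ?_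
  have hprod := Finset.prod_nonneg fun s (_ : s ∈ Finset.univ) => hP (ω s)
  rw [Finset.prod_mul_distrib, ← exp_sum, ← Finset.mul_sum,
    show exp (-(t * r)) * ((∏ s, P (ω s)) * exp (t * ∑ s, g (ω s)))
      = (∏ s, P (ω s)) * exp (t * (∑ s, g (ω s) - r)) by
        rw [mul_sub, sub_eq_neg_add, exp_add]; ring]
  split_ifs with h
  · exact le_mul_of_one_le_right hprod (one_le_exp (by nlinarith))
  · positivity

theorem sum_mul_exp_le (hP : ∀ i, 0 ≤ P i) (hP1 : ∑ i, P i = 1) {g : Fin d → ℝ}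
    (hmean : ∑ i, P i * g i = 0) (hg : ∀ i, |g i| ≤ 1) :
    ∑ i, P i * exp (g i) ≤ exp (∑ i, P i * g i ^ 2) := by
  calc ∑ i, P i * exp (g i) ≤ ∑ i, (P i + P i * g i + P i * g i ^ 2) :=
        Finset.sum_le_sum fun i _ => by
          have := (abs_le.1 (abs_exp_sub_one_sub_id_le (hg i))).2
          nlinarith [hP i]
    _ = 1 + ∑ i, P i * g i ^ 2 := by
        rw [Finset.sum_add_distrib, Finset.sum_add_distrib, hP1, hmean, add_zero]
    _ ≤ exp (∑ i, P i * g i ^ 2) := by linarith [add_one_le_exp (∑ i, P i * g i ^ 2)]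

theorem exists_probT_mul_lt_sum_le_exp (hP : ∀ i, 0 ≤ P i) (hP1 : ∑ i, P i = 1)
    {g : Fin d → ℝ} (hmean : ∑ i, P i * g i = 0) {δ : ℝ} (hδ : 0 < δ) :
    ∃ c > 0, ∀ T : ℕ, probT P T (fun ω => T * δ < ∑ s, g (ω s)) ≤ exp (-c * T) := by
  set B := ∑ i, |g i| + 1
  have hB : 0 < B := by positivity
  have hgB : ∀ i, |g i| ≤ B := fun i => by
    have := Finset.single_le_sum (fun j _ => abs_nonneg (g j)) (Finset.mem_univ i)
    linarith
  set t := min (1 / B) (δ / (2 * B ^ 2))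
  have ht : 0 < t := by positivity
  have htB : t * B ≤ 1 := by
    have := mul_le_mul_of_nonneg_right (min_le_left (1 / B) (δ / (2 * B ^ 2))) hB.le
    rwa [one_div_mul_cancel hB.ne'] at this
  have htB2 : t * B ^ 2 ≤ δ / 2 := by
    have := mul_le_mul_of_nonneg_right (min_le_right (1 / B) (δ / (2 * B ^ 2))) (sq_nonneg B)
    rwa [div_mul_eq_mul_div, mul_div_mul_right _ _ (pow_pos hB 2).ne'] at this
  have hmgf : ∑ i, P i * exp (t * g i) ≤ exp (t ^ 2 * B ^ 2) := by
    refine (sum_mul_exp_le hP hP1 (g := fun i => t * g i) (by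
      simp only [mul_left_comm (P _) t, ← Finset.mul_sum, hmean, mul_zero]) fun i => ?_).trans
      (exp_le_exp.2 ?_)
    · rw [abs_mul, abs_of_pos ht]
      nlinarith [hgB i, abs_nonneg (g i)]
    · calc ∑ i, P i * (t * g i) ^ 2 ≤ ∑ i, P i * (t ^ 2 * B ^ 2) :=
            Finset.sum_le_sum fun i _ => by
              rw [mul_pow]
              exact mul_le_mul_of_nonneg_left (mul_le_mul_of_nonneg_left
                (sq_le_sq' (abs_le.1 (hgB i)).1 (abs_le.1 (hgB i)).2) (sq_nonneg t)) (hP i)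
        _ = t ^ 2 * B ^ 2 := by rw [← Finset.sum_mul, hP1, one_mul]
  refine ⟨t * δ / 2, by positivity, fun T => ?_⟩
  calc probT P T (fun ω => T * δ < ∑ s, g (ω s))
      ≤ exp (-(t * (T * δ))) * (∑ i, P i * exp (t * g i)) ^ T := probT_lt_sum_le hP g ht.le T _
    _ ≤ exp (-(t * (T * δ))) * exp (t ^ 2 * B ^ 2) ^ T := by
        gcongr
        exact Finset.sum_nonneg fun i _ => mul_nonneg (hP i) (exp_pos _).le
    _ = exp (-(t * δ - t * (t * B ^ 2)) * T) := by rw [← exp_nat_mul, ← exp_add]; ring_nf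
    _ ≤ exp (-(t * δ / 2) * T) := by
        gcongr
        nlinarith

theorem exists_probT_cost_empDist_lt_le_exp {X : Type*} (ℓ : X → Fin d → ℝ) (x : X)
    (hP : ∀ i, 0 ≤ P i) (hP1 : ∑ i, P i = 1) {A : ℝ} (hA : 0 < A) :
    ∃ c > 0, ∀ T : ℕ, 0 < T →
      probT P T (fun ω => cost ℓ x (empDist ω) < cost ℓ x P - A) ≤ exp (-c * T) := by
  have hmean : ∑ i, P i * (cost ℓ x P - ℓ x i) = 0 := by
    rw [Finset.sum_congr rfl fun i _ => mul_sub (P i) _ _, Finset.sum_sub_distrib,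
      ← Finset.sum_mul, hP1, one_mul, sub_eq_zero]
    exact Finset.sum_congr rfl fun i _ => mul_comm _ _
  obtain ⟨c, hc, h⟩ := exists_probT_mul_lt_sum_le_exp hP hP1 hmean hA
  refine ⟨c, hc, fun T hT => le_of_eq_of_le (congrArg (probT P T) (funext fun ω => propext ?_))
    (h T)⟩
  rw [cost_empDist, div_lt_iff₀ (Nat.cast_pos.2 hT), Finset.sum_sub_distrib, Finset.sum_const,
    Finset.card_univ, Fintype.card_fin, nsmul_eq_mul]
  constructor <;> intro <;> linarith

end Probability

/-- `limsup_{T→∞} (1/a_T) log p_T ≤ -1`, in the ε-eventual form of `OOSGuarantee`. -/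
def DecaysAtSpeed (a p : ℕ → ℝ) : Prop :=
  ∀ ε > (0 : ℝ), ∀ᶠ T : ℕ in atTop, p T ≤ exp ((-1 + ε) * a T)

section Speed

variable {a p q : ℕ → ℝ}

theorem DecaysAtSpeed.mono (hq : DecaysAtSpeed a q) (h : ∀ᶠ T in atTop, p T ≤ q T) :
    DecaysAtSpeed a p :=
  fun ε hε => (h.and (hq ε hε)).mono fun _ hT => hT.1.trans hT.2

theorem DecaysAtSpeed.add (ha : Tendsto a atTop atTop) (hp : DecaysAtSpeed a p)
    (hq : DecaysAtSpeed a q) : DecaysAtSpeed a fun T => p T + q T := by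
  intro ε hε
  filter_upwards [hp (ε / 2) (half_pos hε), hq (ε / 2) (half_pos hε),
    ha.eventually_ge_atTop (2 * log 2 / ε)] with T hpT hqT haT
  have : log 2 ≤ ε / 2 * a T := by rw [div_le_iff₀ hε] at haT; linarith
  calc p T + q T ≤ 2 * exp ((-1 + ε / 2) * a T) := by linarith
    _ = exp (log 2 + (-1 + ε / 2) * a T) := by rw [exp_add, exp_log two_pos]
    _ ≤ exp ((-1 + ε) * a T) := exp_le_exp.2 (by linarith)

theorem decaysAtSpeed_exp (ha_top : Tendsto a atTop atTop)
    (ha_sub : Tendsto (fun T : ℕ => a T / (T : ℝ)) atTop (nhds 0)) {c : ℝ} (hc : 0 < c) :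
    DecaysAtSpeed a fun T => exp (-c * T) := by
  intro ε hε
  filter_upwards [ha_top.eventually_ge_atTop 0, ha_sub.eventually (gt_mem_nhds hc),
    eventually_gt_atTop 0] with T ha0 hac hT
  rw [div_lt_iff₀ (Nat.cast_pos.2 hT)] at hac
  exact exp_le_exp.2 (by nlinarith [mul_nonneg hε.le ha0])

end Speed

section Clipped

variable {X : Type*} {d : ℕ} {ℓ : X → Fin d → ℝ} {chat : X → (Fin d → ℝ) → ℕ → ℝ} {A : ℝ}

noncomputable def clipPredictor (ℓ : X → Fin d → ℝ) (A : ℝ)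
    (chat : X → (Fin d → ℝ) → ℕ → ℝ) : X → (Fin d → ℝ) → ℕ → ℝ :=
  fun x P T => cost ℓ x P + clip A (chat x P T - cost ℓ x P)

theorem predErr_clipPredictor (x : X) (P : Fin d → ℝ) (T : ℕ) :
    predErr ℓ (clipPredictor ℓ A chat) x P T = |clip A (chat x P T - cost ℓ x P)| := by
  simp [predErr, clipPredictor]

theorem isRegularPredictor_clipPredictor [MetricSpace X] [CompactSpace X]
    (hℓ : ∀ i, Continuous fun x => ℓ x i) (hA : 0 < A) (hchat : IsRegularPredictor d chat) :
    IsRegularPredictor d (clipPredictor ℓ A chat) :=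
  (isRegularPredictor_cost hℓ).add <| (hchat.sub (isRegularPredictor_cost hℓ)).comp
    (hasDerivAt_clip hA) (lipschitzWith_clip hA)
    ((lipschitzWith_capDeriv hA).comp lipschitzWith_one_norm).uniformContinuous

theorem oosGuarantee_iff {a : ℕ → ℝ} : OOSGuarantee ℓ a chat ↔ ∀ (x : X), ∀ P ∈ simplexInt d,
    DecaysAtSpeed a fun T => probT P T fun ω => cost ℓ x P > chat x (empDist ω) T :=
  Iff.rfl

/-- A disappointment of the clipped predictor is either one of `ĉ` or a deviation of the
empirical cost by more than `A`, which is exponentially rare. -/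
theorem oosGuarantee_clipPredictor {a : ℕ → ℝ} (ha_top : Tendsto a atTop atTop)
    (ha_sub : Tendsto (fun T : ℕ => a T / (T : ℝ)) atTop (nhds 0)) (hA : 0 < A)
    (hoos : OOSGuarantee ℓ a chat) : OOSGuarantee ℓ a (clipPredictor ℓ A chat) := by
  refine oosGuarantee_iff.2 fun x P hP => ?_
  have hP₀ : ∀ i, 0 ≤ P i := fun i => (hP.1 i).le
  obtain ⟨c, hc, hdev⟩ := exists_probT_cost_empDist_lt_le_exp ℓ x hP₀ hP.2 hA
  refine ((oosGuarantee_iff.1 hoos x P hP).add ha_top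
    (decaysAtSpeed_exp ha_top ha_sub hc)).mono ?_
  filter_upwards [eventually_gt_atTop 0] with T hT
  refine (probT_le_add_of_imp hP₀ fun ω hω => ?_).trans (add_le_add le_rfl (hdev T hT))
  have := min_le_clip hA (chat x (empDist ω) T - cost ℓ x (empDist ω))
  rw [clipPredictor] at hω
  rcases min_lt_iff.1 (show min _ A < cost ℓ x P - cost ℓ x (empDist ω) by linarith) with h | h
  · exact Or.inl (by linarith)
  · exact Or.inr (by linarith)

theorem ratio_le_one {u v : ℝ} (hu : 0 ≤ u) (huv : u ≤ v) : ratio u v ≤ 1 := by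
  rcases (hu.trans huv).eq_or_lt with hv | hv
  · simp [ratio, ← hv, le_antisymm (hv ▸ huv) hu]
  · rw [ratio, if_neg fun h => hv.ne' h.2]
    exact (div_le_one hv).2 huv

theorem predOrder_clipPredictor (hA : 0 < A) : PredOrder ℓ (clipPredictor ℓ A chat) chat :=
  fun x P _ ε hε => Eventually.of_forall fun T =>
    (ratio_le_one (u := predErr ℓ (clipPredictor ℓ A chat) x P T) (abs_nonneg _)
      (by rw [predErr_clipPredictor]; exact abs_clip_le hA _)).trans (by linarith)

theorem not_isEquivalent_of_frequently {α : Type*} {l : Filter α} {u v : α → ℝ}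
    (h : ∃ᶠ T in l, v T ≠ 0 ∧ 2 * |u T| ≤ |v T|) : ¬ u ~[l] v := by
  intro huv
  obtain ⟨T, ⟨hv, huvT⟩, hT⟩ :=
    (h.and_eventually (huv.isLittleO.def (by norm_num : (0 : ℝ) < 1 / 4))).exists
  rw [Pi.sub_apply, Real.norm_eq_abs, Real.norm_eq_abs] at hT
  have := abs_sub_abs_le_abs_sub (v T) (u T)
  rw [abs_sub_comm] at this
  linarith [abs_pos.2 hv]

theorem not_predEquiv_clipPredictor (hA : 0 < A) {x : X} {P : Fin d → ℝ} (hP : P ∈ simplexInt d)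
    (h : ∃ᶠ T in atTop, 4 * A ≤ predErr ℓ chat x P T) :
    ¬ PredEquiv ℓ (clipPredictor ℓ A chat) chat := fun hE =>
  not_isEquivalent_of_frequently (h.mono fun T hT => by
    have hpos : 0 < predErr ℓ chat x P T := by linarith
    refine ⟨hpos.ne', ?_⟩
    rw [abs_of_pos hpos, predErr_clipPredictor, abs_abs]
    linarith [abs_clip_le_two_mul hA (chat x P T - cost ℓ x P)]) (hE x P hP)

end Clipped

theorem exists_frequently_le_predErr {X : Type*} [MetricSpace X] {d : ℕ} {ℓ : X → Fin d → ℝ}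
    (hℓ : ∀ i, Continuous fun x => ℓ x i) {chat : X → (Fin d → ℝ) → ℕ → ℝ}
    (hreg : IsRegularPredictor d chat)
    (h : ¬ ∀ (x : X), ∀ P ∈ simplex d, Tendsto (fun T => chat x P T) atTop (nhds (cost ℓ x P))) :
    ∃ (x : X), ∃ P ∈ simplexInt d, ∃ δ > (0 : ℝ), ∃ᶠ T in atTop, δ ≤ predErr ℓ chat x P T := by
  have hF : EquicontinuousOnSimplex fun x P T => chat x P T - cost ℓ x P :=
    (isRegularPredictor_iff.1 hreg).2.1.sub (.of_continuous (continuous_uncurry_cost hℓ))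
  contrapose! h
  intro x P hP
  refine tendsto_sub_nhds_zero_iff.1 (hF.tendsto_of_tendsto_simplexInt (fun x P hP => ?_) x P hP)
  exact Metric.tendsto_nhds.2 fun ε hε => by simpa [predErr, Real.dist_eq] using h x P hP ε hε

theorem stmt_3_general {X : Type*} [MetricSpace X] [CompactSpace X] {d : ℕ}
    (ℓ : X → Fin d → ℝ) (hℓ : ∀ i, Continuous fun x => ℓ x i)
    (a : ℕ → ℝ)
    (ha_top : Tendsto a atTop atTop)
    (ha_sub : Tendsto (fun T : ℕ => a T / (T : ℝ)) atTop (nhds 0)) :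
    ∀ chat : X → (Fin d → ℝ) → ℕ → ℝ,
      IsRegularPredictor d chat → OOSGuarantee ℓ a chat →
        (∀ (x : X), ∀ P ∈ simplex d,
            Tendsto (fun T : ℕ => chat x P T) atTop (nhds (cost ℓ x P))) ∨
          ∃ chat' : X → (Fin d → ℝ) → ℕ → ℝ,
            IsRegularPredictor d chat' ∧ OOSGuarantee ℓ a chat' ∧
              PredOrder ℓ chat' chat ∧ ¬PredEquiv ℓ chat' chat := by
  intro chat hreg hoos
  by_cases hconv : ∀ (x : X), ∀ P ∈ simplex d,
      Tendsto (fun T : ℕ => chat x P T) atTop (nhds (cost ℓ x P))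
  · exact Or.inl hconv
  obtain ⟨x, P, hP, δ, hδ, hfreq⟩ := exists_frequently_le_predErr hℓ hreg hconv
  have hA : 0 < δ / 4 := by positivity
  exact Or.inr ⟨clipPredictor ℓ (δ / 4) chat, isRegularPredictor_clipPredictor hℓ hA hreg,
    oosGuarantee_clipPredictor ha_top ha_sub hA hoos, predOrder_clipPredictor hA,
    not_predEquiv_clipPredictor (x := x) hA hP (hfreq.mono fun T hT => by linarith)⟩

/-- In the subexponential regime (`a_T → ∞`, `a_T/T → 0`), every weakly optimal
regular predictor is consistent: every regular predictor satisfying the out-of-sample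
guarantee is either pointwise convergent to the true cost, or strictly dominated by
another regular predictor satisfying the guarantee. -/
theorem stmt_3 {X : Type*} [MetricSpace X] [CompactSpace X] {d : ℕ}
    (ℓ : X → Fin d → ℝ) (hℓ : ∀ i, Continuous fun x => ℓ x i)
    (a : ℕ → ℝ) (ha_pos : ∀ T, 0 < a T)
    (ha_top : Tendsto a atTop atTop)
    (ha_sub : Tendsto (fun T : ℕ => a T / (T : ℝ)) atTop (nhds 0)) :
    ∀ chat : X → (Fin d → ℝ) → ℕ → ℝ,
      IsRegularPredictor d chat → OOSGuarantee ℓ a chat →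
        (∀ (x : X), ∀ P ∈ simplex d,
            Tendsto (fun T : ℕ => chat x P T) atTop (nhds (cost ℓ x P))) ∨
          ∃ chat' : X → (Fin d → ℝ) → ℕ → ℝ,
            IsRegularPredictor d chat' ∧ OOSGuarantee ℓ a chat' ∧
              PredOrder ℓ chat' chat ∧ ¬PredEquiv ℓ chat' chat :=
  stmt_3_general ℓ hℓ a ha_top ha_sub

end DDO
end
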